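/- arXiv:1102.0842 — 6 statements merged into one kernel-verified Lean document; each statement's English description precedes it below -/
import Mathlib

section
/- For a > 0 define u_a(η) = exp(-a·η/(ln η)²) for η > 1. For every integer k ≥ 0 and every real t ≥ e⁴ such that a·t/(ln t)² ≥ 2k+2, one has ∫_t^∞ η^k u_a(η) dη ≤ ((2k+3)/a) · t^{2k+2} · u_a(t). -/
/-!
For `x ≥ t ≥ e⁴` the ratio `√x / (log x)²` is nondecreasing, so `a x / (log x)² ≥ b √x` with
`b = a √t / (log t)²`, and the integrand is dominated by `x ^ k exp (-b √x)`. Up to a constant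
factor, the latter is bounded by the derivative of `-√x ^ (2k+1) exp (-b √x)` on `[t, ∞)`
as soon as `b √t = a t / (log t)² > 2k + 1`, which bounds the integral by
`2 t ^ (k+1) exp (-b √t) / (b √t - (2k+1))`. The stated form follows from `(log t)² ≤ 4t`.
-/

open MeasureTheory Real Filter Set Topology

theorem sqrt_eq_exp_log_div_two {x : ℝ} (hx : 0 < x) : √x = exp (log x / 2) := by
  rw [sqrt_eq_iff_mul_self_eq hx.le (exp_pos _).le, ← exp_add, add_halves, exp_log hx]

/-- `√x / (log x)²` is nondecreasing on `[e⁴, ∞)`, where its logarithmic derivative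
`(log x - 4) / (2 x log x)` is nonnegative. -/
theorem sq_log_mul_sqrt_le_of_exp_four_le {t x : ℝ} (ht : exp 4 ≤ t) (hx : t ≤ x) :
    log x ^ 2 * √t ≤ log t ^ 2 * √x := by
  have ht0 : 0 < t := (exp_pos 4).trans_le ht
  have hy : 4 ≤ log t := (le_log_iff_exp_le ht0).2 ht
  have hyz : log t ≤ log x := log_le_log ht0 hx
  have hlin : log x ≤ log t * exp ((log x - log t) / 4) := by
    nlinarith [add_one_le_exp ((log x - log t) / 4)]
  have hsq : log x ^ 2 ≤ log t ^ 2 * exp ((log x - log t) / 2) := by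
    calc log x ^ 2 ≤ (log t * exp ((log x - log t) / 4)) ^ 2 :=
          pow_le_pow_left₀ (by linarith) hlin 2
      _ = log t ^ 2 * exp ((log x - log t) / 2) := by rw [mul_pow, ← exp_nat_mul]; ring_nf
  rw [sqrt_eq_exp_log_div_two ht0, sqrt_eq_exp_log_div_two (ht0.trans_le hx)]
  calc log x ^ 2 * exp (log t / 2)
      ≤ log t ^ 2 * exp ((log x - log t) / 2) * exp (log t / 2) := by gcongr
    _ = log t ^ 2 * exp (log x / 2) := by rw [mul_assoc, ← exp_add]; ring_nf

theorem mul_sqrt_le_div_sq_log {a t x : ℝ} (ha : 0 ≤ a) (ht : exp 4 ≤ t) (hx : t ≤ x) :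
    a * √t / log t ^ 2 * √x ≤ a * x / log x ^ 2 := by
  have ht0 : 0 < t := (exp_pos 4).trans_le ht
  have hlt : 0 < log t := by linarith [(le_log_iff_exp_le ht0).2 ht]
  have hlx : 0 < log x := hlt.trans_le (log_le_log ht0 hx)
  rw [div_mul_eq_mul_div, div_le_div_iff₀ (by positivity) (by positivity)]
  calc a * √t * √x * log x ^ 2 = a * √x * (log x ^ 2 * √t) := by ring
    _ ≤ a * √x * (log t ^ 2 * √x) :=
        mul_le_mul_of_nonneg_left (sq_log_mul_sqrt_le_of_exp_four_le ht hx) (by positivity)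
    _ = a * (√x * √x) * log t ^ 2 := by ring
    _ = a * x * log t ^ 2 := by rw [mul_self_sqrt (ht0.le.trans hx)]

theorem integral_Ioi_le_neg_of_le_deriv {f F F' : ℝ → ℝ} {t : ℝ}
    (hF : ∀ x ∈ Ici t, HasDerivAt F (F' x) x) (hf : ∀ x ∈ Ioi t, 0 ≤ f x)
    (hfF : ∀ x ∈ Ioi t, f x ≤ F' x) (hlim : Tendsto F atTop (𝓝 0)) :
    ∫ x in Ioi t, f x ≤ -F t := by
  have hF' : ∀ x ∈ Ioi t, 0 ≤ F' x := fun x hx ↦ (hf x hx).trans (hfF x hx)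
  calc ∫ x in Ioi t, f x ≤ ∫ x in Ioi t, F' x :=
        integral_mono_of_nonneg ((ae_restrict_iff' measurableSet_Ioi).2 (.of_forall hf))
          (integrableOn_Ioi_deriv_of_nonneg' hF hF' hlim)
          ((ae_restrict_iff' measurableSet_Ioi).2 (.of_forall hfF))
    _ = -F t := by rw [integral_Ioi_of_hasDerivAt_of_nonneg' hF hF' hlim, zero_sub]

theorem hasDerivAt_sqrt_pow_mul_exp_neg_mul_sqrt (k : ℕ) (b : ℝ) {x : ℝ} (hx : 0 < x) :
    HasDerivAt (fun y ↦ √y ^ (2 * k + 1) * exp (-(b * √y)))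
      (x ^ k * exp (-(b * √x)) * (2 * k + 1 - b * √x) / (2 * √x)) x := by
  have hs : HasDerivAt (√·) (1 / (2 * √x)) x := hasDerivAt_sqrt hx.ne'
  refine ((hs.fun_pow (2 * k + 1)).fun_mul (hs.const_mul b).fun_neg.exp).congr_deriv ?_
  have hsx : √x ≠ 0 := (sqrt_pos.2 hx).ne'
  rw [Nat.add_sub_cancel, pow_succ, pow_mul, sq_sqrt hx.le]
  field_simp
  push_cast
  ring

theorem tendsto_sqrt_pow_mul_exp_neg_mul_sqrt (k : ℕ) {b : ℝ} (hb : 0 < b) :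
    Tendsto (fun y ↦ √y ^ (2 * k + 1) * exp (-(b * √y))) atTop (𝓝 0) := by
  have := (tendsto_rpow_mul_exp_neg_mul_atTop_nhds_zero (2 * k + 1) b hb).comp tendsto_sqrt_atTop
  refine this.congr fun y ↦ ?_
  simp [← rpow_natCast, neg_mul]

theorem integral_Ioi_le_of_le_pow_mul_exp_neg_mul_sqrt {f : ℝ → ℝ} (k : ℕ) {b t : ℝ}
    (ht : 0 < t) (hbt : 2 * k + 1 < b * √t) (hf0 : ∀ x ∈ Ioi t, 0 ≤ f x)
    (hf : ∀ x ∈ Ioi t, f x ≤ x ^ k * exp (-(b * √x))) :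
    ∫ x in Ioi t, f x ≤ 2 * t ^ (k + 1) * exp (-(b * √t)) / (b * √t - (2 * k + 1)) := by
  have hst : 0 < √t := sqrt_pos.2 ht
  have hgap : 0 < b * √t - (2 * k + 1) := by linarith
  have hb : 0 < b := by
    by_contra! hb
    nlinarith [mul_nonpos_of_nonpos_of_nonneg hb hst.le]
  set C := 2 * √t / (b * √t - (2 * k + 1))
  have hderiv : ∀ x ∈ Ici t, HasDerivAt (fun y ↦ -(C * (√y ^ (2 * k + 1) * exp (-(b * √y)))))
      (-(C * (x ^ k * exp (-(b * √x)) * (2 * k + 1 - b * √x) / (2 * √x)))) x :=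
    fun x hx ↦ ((hasDerivAt_sqrt_pow_mul_exp_neg_mul_sqrt k b (ht.trans_le hx)).const_mul C).neg
  have hdom : ∀ x ∈ Ioi t,
      f x ≤ -(C * (x ^ k * exp (-(b * √x)) * (2 * k + 1 - b * √x) / (2 * √x))) := by
    intro x hx
    have hx0 : 0 < x := ht.trans hx
    have hsx : √t ≤ √x := sqrt_le_sqrt hx.le
    have hgrowth : 1 ≤ C * ((b * √x - (2 * k + 1)) / (2 * √x)) := by
      rw [div_mul_div_comm, le_div_iff₀ (by positivity)]
      nlinarith
    calc f x ≤ x ^ k * exp (-(b * √x)) := hf x hx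
      _ ≤ x ^ k * exp (-(b * √x)) * (C * ((b * √x - (2 * k + 1)) / (2 * √x))) :=
        le_mul_of_one_le_right (by positivity) hgrowth
      _ = _ := by ring
  have hlim := (tendsto_sqrt_pow_mul_exp_neg_mul_sqrt k hb).const_mul C |>.neg
  rw [mul_zero, neg_zero] at hlim
  refine (integral_Ioi_le_neg_of_le_deriv hderiv hf0 hdom hlim).trans_eq ?_
  rw [neg_neg, pow_succ, pow_mul, sq_sqrt ht.le]
  simp only [C]
  field_simp
  rw [sq_sqrt ht.le, pow_succ']

theorem sq_log_le_four_mul {t : ℝ} (ht : 1 ≤ t) : log t ^ 2 ≤ 4 * t := by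
  have ht0 : 0 < t := one_pos.trans_le ht
  have h := log_le_sub_one_of_pos (sqrt_pos.2 ht0)
  rw [log_sqrt ht0.le] at h
  calc log t ^ 2 ≤ (2 * √t) ^ 2 := pow_le_pow_left₀ (log_nonneg ht) (by linarith) 2
    _ = 4 * t := by rw [mul_pow, sq_sqrt ht0.le]; norm_num

theorem two_mul_pow_div_sub_le {a t : ℝ} (k : ℕ) (ha : 0 < a) (ht : exp 4 ≤ t)
    (hc : 2 * (k : ℝ) + 2 ≤ a * t / log t ^ 2) :
    2 * t ^ (k + 1) / (a * t / log t ^ 2 - (2 * k + 1)) ≤ (2 * k + 3) / a * t ^ (2 * k + 2) := by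
  have ht0 : 0 < t := (exp_pos 4).trans_le ht
  set c := a * t / log t ^ 2
  have hc0 : 0 < c := by linarith
  have ht13 : 13 ≤ t := by
    linarith [quadratic_le_exp_of_nonneg (x := 4) (by norm_num)]
  have hac : a ≤ 4 * c := by
    have hlog := sq_log_le_four_mul (by linarith : 1 ≤ t)
    have hlt : 0 < log t ^ 2 := pow_pos (log_pos (by linarith)) 2
    rw [mul_div_assoc', le_div_iff₀ hlt]
    nlinarith [mul_le_mul_of_nonneg_left hlog ha.le]
  have hT : 13 ≤ t ^ (k + 1) := ht13.trans (le_self_pow₀ (by linarith) (by omega))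
  calc 2 * t ^ (k + 1) / (c - (2 * k + 1)) ≤ 2 * (2 * k + 2) * t ^ (k + 1) / c := by
        rw [div_le_div_iff₀ (by linarith) hc0]
        nlinarith [mul_le_mul_of_nonneg_left hc
          (by positivity : (0 : ℝ) ≤ t ^ (k + 1) * (2 * k + 1))]
    _ ≤ (2 * k + 3) / (4 * c) * t ^ (2 * k + 2) := by
        rw [show 2 * k + 2 = (k + 1) * 2 by ring, pow_mul, div_mul_eq_mul_div,
          div_le_div_iff₀ hc0 (by positivity)]
        have key : 8 * (2 * k + 2) ≤ (2 * k + 3) * t ^ (k + 1) := by nlinarith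
        nlinarith [mul_le_mul_of_nonneg_left key (by positivity : (0 : ℝ) ≤ t ^ (k + 1) * c)]
    _ ≤ (2 * k + 3) / a * t ^ (2 * k + 2) := by gcongr

/-- For `u_a(η) = exp(-a η / (ln η)²)`, any integer `k ≥ 0` and `t ≥ e⁴` with
`a t/(ln t)² ≥ 2k+2`, one has `∫_t^∞ η^k u_a(η) dη ≤ ((2k+3)/a) t^{2k+2} u_a(t)`. -/
theorem integral_pow_mul_subexp_le (a : ℝ) (ha : 0 < a) (k : ℕ) (t : ℝ)
    (ht : Real.exp 4 ≤ t)
    (hcond : (2 * (k : ℝ) + 2) ≤ a * t / (Real.log t) ^ 2) :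
    (∫ η in Set.Ioi t, η ^ k * Real.exp (-(a * η / (Real.log η) ^ 2))) ≤
      ((2 * (k : ℝ) + 3) / a) * t ^ (2 * k + 2) * Real.exp (-(a * t / (Real.log t) ^ 2)) := by
  have ht0 : 0 < t := (exp_pos 4).trans_le ht
  have hbt : a * √t / log t ^ 2 * √t = a * t / log t ^ 2 := by
    rw [div_mul_eq_mul_div, mul_assoc, mul_self_sqrt ht0.le]
  have hint := integral_Ioi_le_of_le_pow_mul_exp_neg_mul_sqrt k
    (f := fun x ↦ x ^ k * exp (-(a * x / log x ^ 2))) (b := a * √t / log t ^ 2) ht0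
    (by linarith) (fun x hx ↦ by have := ht0.trans hx; positivity)
    (fun x hx ↦ by have := ht0.trans hx; gcongr; exact mul_sqrt_le_div_sq_log ha.le ht hx.le)
  rw [hbt, mul_div_right_comm] at hint
  refine hint.trans ?_
  gcongr ?_ * _
  exact two_mul_pow_div_sub_le k ha ht hcond
end

section
/- Let γ > 0 and define a_1 > 0 and a_n = a_1/(n (ln n)²) for n ≥ 2 so that ∑_{n=1}^∞ a_n = γ/2 (the series converges). Then the infinite product w_γ(t) = c_γ ∏_{n=1}^∞ (sin(a_n t)/(a_n t))² converges for every real t, defines an even nonnegative function with 0 ≤ w_γ(t) ≤ c_γ, and w_γ ∈ L¹(ℝ). -/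
open Real MeasureTheory

/-- `sinc x = sin x / x`, with the value `1` at `x = 0`. -/
noncomputable def sinc (x : ℝ) : ℝ := if x = 0 then 1 else Real.sin x / x

/-!
Every factor `sinc (a_n t) ^ 2` lies in `[0, 1]`, so the partial products decrease and the
product converges to their infimum, which lies in `[0, 1]` and is bounded by any single factor.
The first factor `sinc (a_1 t) ^ 2 ≤ 2 / (1 + (a_1 t) ^ 2)` is already integrable, hence so is `w`.
-/

theorem sinc_eq_real_sinc : _root_.sinc = Real.sinc := rfl

namespace Real

theorem sinc_sq_mul_one_add_sq_le_two (x : ℝ) : sinc x ^ 2 * (1 + x ^ 2) ≤ 2 := by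
  have hsinc_sq : sinc x ^ 2 ≤ 1 := sq_le_one_iff_abs_le_one _ |>.mpr (abs_sinc_le_one x)
  rcases eq_or_ne x 0 with rfl | hx
  · simp
  · have hsin : sinc x ^ 2 * x ^ 2 = sin x ^ 2 := by
      rw [sinc_of_ne_zero hx, div_pow, div_mul_cancel₀ _ (pow_ne_zero 2 hx)]
    nlinarith [sin_sq_le_one x]

theorem integrable_sinc_sq_comp_mul {b : ℝ} (hb : b ≠ 0) :
    Integrable fun t : ℝ => sinc (b * t) ^ 2 := by
  have hdom : Integrable fun t : ℝ => 2 * (1 + (b * t) ^ 2)⁻¹ :=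
    (integrable_inv_one_add_sq.comp_mul_left' hb).const_mul 2
  refine hdom.mono' ((continuous_sinc.comp (continuous_const_mul b)).pow 2).aestronglyMeasurable
    (Filter.Eventually.of_forall fun t => ?_)
  rw [norm_of_nonneg (sq_nonneg _), ← div_eq_mul_inv, le_div_iff₀ (by positivity)]
  exact sinc_sq_mul_one_add_sq_le_two _

end Real

section ProductOfFactorsInUnitInterval

variable {ι : Type*} {f : ι → ℝ}

theorem hasProd_iInf_of_nonneg_of_le_one (h0 : ∀ i, 0 ≤ f i) (h1 : ∀ i, f i ≤ 1) :
    HasProd f (⨅ s : Finset ι, ∏ i ∈ s, f i) := by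
  classical
  refine tendsto_atTop_ciInf (fun s t hst => ?_) ⟨0, ?_⟩
  · calc ∏ i ∈ t, f i = (∏ i ∈ t \ s, f i) * ∏ i ∈ s, f i := (Finset.prod_sdiff hst).symm
      _ ≤ ∏ i ∈ s, f i :=
        mul_le_of_le_one_left (Finset.prod_nonneg fun i _ => h0 i)
          (Finset.prod_le_one (fun i _ => h0 i) fun i _ => h1 i)
  · rintro _ ⟨s, rfl⟩
    exact Finset.prod_nonneg fun i _ => h0 i

theorem tprod_eq_iInf_of_nonneg_of_le_one (h0 : ∀ i, 0 ≤ f i) (h1 : ∀ i, f i ≤ 1) :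
    ∏' i, f i = ⨅ s : Finset ι, ∏ i ∈ s, f i :=
  (hasProd_iInf_of_nonneg_of_le_one h0 h1).tprod_eq

theorem bddBelow_range_finsetProd_of_nonneg (h0 : ∀ i, 0 ≤ f i) :
    BddBelow (Set.range fun s : Finset ι => ∏ i ∈ s, f i) :=
  ⟨0, by rintro _ ⟨s, rfl⟩; exact Finset.prod_nonneg fun i _ => h0 i⟩

theorem tprod_nonneg_of_le_one (h0 : ∀ i, 0 ≤ f i) (h1 : ∀ i, f i ≤ 1) : 0 ≤ ∏' i, f i := by
  rw [tprod_eq_iInf_of_nonneg_of_le_one h0 h1]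
  exact le_ciInf fun s => Finset.prod_nonneg fun i _ => h0 i

theorem tprod_le_of_nonneg_of_le_one (h0 : ∀ i, 0 ≤ f i) (h1 : ∀ i, f i ≤ 1) (j : ι) :
    ∏' i, f i ≤ f j := by
  rw [tprod_eq_iInf_of_nonneg_of_le_one h0 h1]
  simpa using ciInf_le (bddBelow_range_finsetProd_of_nonneg h0) {j}

theorem measurable_tprod_of_nonneg_of_le_one [Countable ι] {α : Type*} [MeasurableSpace α]
    {g : ι → α → ℝ} (hg : ∀ i, Measurable (g i)) (h0 : ∀ i x, 0 ≤ g i x)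
    (h1 : ∀ i x, g i x ≤ 1) : Measurable fun x => ∏' i, g i x := by
  simp_rw [tprod_eq_iInf_of_nonneg_of_le_one (h0 · _) (h1 · _)]
  exact Measurable.iInf fun s => Finset.measurable_prod s fun i _ => hg i

theorem integrable_tprod_of_nonneg_of_le_one [Countable ι] {α : Type*} [MeasurableSpace α]
    {μ : Measure α} {g : ι → α → ℝ} (hg : ∀ i, Measurable (g i)) (h0 : ∀ i x, 0 ≤ g i x)
    (h1 : ∀ i x, g i x ≤ 1) (j : ι) (hj : Integrable (g j) μ) :
    Integrable (fun x => ∏' i, g i x) μ := by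
  refine hj.mono' (measurable_tprod_of_nonneg_of_le_one hg h0 h1).aestronglyMeasurable
    (Filter.Eventually.of_forall fun x => ?_)
  rw [norm_of_nonneg (tprod_nonneg_of_le_one (h0 · x) (h1 · x))]
  exact tprod_le_of_nonneg_of_le_one (h0 · x) (h1 · x) j

end ProductOfFactorsInUnitInterval

theorem infinite_product_weight_properties_general
    (a : ℕ → ℝ) (ha1 : 0 < a 1)
    (c : ℝ) (hc : 0 < c)
    (w : ℝ → ℝ) (hw : ∀ t, w t = c * ∏' n : ℕ, (_root_.sinc (a (n + 1) * t)) ^ 2) :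
    (∀ t : ℝ, Multipliable (fun n : ℕ => (_root_.sinc (a (n + 1) * t)) ^ 2)) ∧
    (∀ t : ℝ, w (-t) = w t) ∧
    (∀ t : ℝ, 0 ≤ w t ∧ w t ≤ c) ∧
    Integrable w := by
  rw [sinc_eq_real_sinc] at hw ⊢
  set F : ℕ → ℝ → ℝ := fun n t => Real.sinc (a (n + 1) * t) ^ 2 with hF
  have hF0 (n : ℕ) (t : ℝ) : 0 ≤ F n t := sq_nonneg _
  have hF1 (n : ℕ) (t : ℝ) : F n t ≤ 1 :=
    sq_le_one_iff_abs_le_one _ |>.mpr (abs_sinc_le_one _)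
  obtain rfl : w = fun t => c * ∏' n, F n t := funext hw
  refine ⟨fun t => ⟨_, hasProd_iInf_of_nonneg_of_le_one (hF0 · t) (hF1 · t)⟩,
    fun t => by simp only [hF, mul_neg, sinc_neg], fun t => ⟨?_, ?_⟩, ?_⟩
  · exact mul_nonneg hc.le (tprod_nonneg_of_le_one (hF0 · t) (hF1 · t))
  · exact mul_le_of_le_one_right hc.le
      ((tprod_le_of_nonneg_of_le_one (hF0 · t) (hF1 · t) 0).trans (hF1 0 t))
  · have hFmeas (n : ℕ) : Measurable (F n) :=
      ((continuous_sinc.comp (continuous_const_mul _)).pow 2).measurable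
    exact (integrable_tprod_of_nonneg_of_le_one hFmeas hF0 hF1 0
      (integrable_sinc_sq_comp_mul ha1.ne')).const_mul c

/-- Let `γ > 0` and `a_1 > 0`, `a_n = a_1/(n (ln n)²)` for `n ≥ 2`, with the (convergent)
series summing to `γ/2`.  Then the infinite product
`w_γ(t) = c_γ ∏_{n≥1} (sin(a_n t)/(a_n t))²` converges for every `t`, defines an even
nonnegative function with `0 ≤ w_γ(t) ≤ c_γ`, and `w_γ ∈ L¹(ℝ)`. -/
theorem infinite_product_weight_properties (γ : ℝ) (hγ : 0 < γ)
    (a : ℕ → ℝ) (ha1 : 0 < a 1)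
    (han : ∀ n : ℕ, 2 ≤ n → a n = a 1 / (n * (Real.log n) ^ 2))
    (hsummable : Summable (fun n : ℕ => a (n + 1)))
    (hsum : ∑' n : ℕ, a (n + 1) = γ / 2)
    (c : ℝ) (hc : 0 < c)
    (w : ℝ → ℝ) (hw : ∀ t, w t = c * ∏' n : ℕ, (_root_.sinc (a (n + 1) * t)) ^ 2) :
    (∀ t : ℝ, Multipliable (fun n : ℕ => (_root_.sinc (a (n + 1) * t)) ^ 2)) ∧
    (∀ t : ℝ, w (-t) = w t) ∧
    (∀ t : ℝ, 0 ≤ w t ∧ w t ≤ c) ∧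
    Integrable w :=
  infinite_product_weight_properties_general a ha1 c hc w hw
end

section
/- Let H₁, H₂ be Hilbert spaces with H₂ finite-dimensional, ε ≥ 0, and A ∈ B(H₁ ⊗ H₂) such that ‖[A, 1 ⊗ B]‖ ≤ ε‖B‖ for all B ∈ B(H₂). Then A' := (dim H₂)^{-1} Tr_{H₂} A ∈ B(H₁) satisfies ‖A' ⊗ 1 − A‖ ≤ ε. -/
open scoped ComplexInnerProductSpace

/-!
Index an orthonormal basis of `H₂` by a finite abelian group `G` and let `W(a, ψ)` send `e j` to
`ψ j • e (j + a)`, for `a ∈ G` and characters `ψ` of `G`. By orthogonality of characters these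
isometries form a unitary 1-design: the average of `W* X W` is `(tr X / dim H₂) • 1`. Lifted to
`H` as `1 ⊗ W`, the same average sends `A` to `A' ⊗ 1`, so `A' ⊗ 1 - A` is the average of the
terms `(1 ⊗ W)* [A, 1 ⊗ W]`, each of norm at most `ε`.
-/

section CStarRing

variable {R : Type*} [NormedRing R] [StarRing R] [CStarRing R]

theorem CStarRing.norm_le_one_of_star_mul_self_eq_one {W : R} (hW : star W * W = 1) :
    ‖W‖ ≤ 1 := by
  rcases subsingleton_or_nontrivial R with _ | _
  · simp [Subsingleton.elim W 0]
  · have : ‖W‖ * ‖W‖ = 1 := by rw [← CStarRing.norm_star_mul_self, hW, CStarRing.norm_one]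
    nlinarith [norm_nonneg W]

theorem norm_sub_le_of_sum_star_mul_mul [NormedSpace ℝ R] {κ : Type*} [Fintype κ] [Nonempty κ]
    (W : κ → R) (hW : ∀ k, star (W k) * W k = 1) {A T : R} {ε : ℝ}
    (hcomm : ∀ k, ‖A * W k - W k * A‖ ≤ ε)
    (hT : ∑ k, star (W k) * A * W k = Fintype.card κ • T) : ‖T - A‖ ≤ ε := by
  have hsum : Fintype.card κ • (T - A) = ∑ k, star (W k) * (A * W k - W k * A) := by
    simp only [smul_sub, ← hT, mul_sub, ← mul_assoc, hW, one_mul, Finset.sum_sub_distrib,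
      Finset.sum_const, Finset.card_univ]
  have hcard : (0 : ℝ) < Fintype.card κ := by exact_mod_cast Fintype.card_pos
  refine le_of_mul_le_mul_left ?_ hcard
  calc (Fintype.card κ : ℝ) * ‖T - A‖ = ‖∑ k, star (W k) * (A * W k - W k * A)‖ := by
        rw [← hsum, RCLike.norm_nsmul ℝ, nsmul_eq_mul]
    _ ≤ ∑ k, ‖star (W k)‖ * ‖A * W k - W k * A‖ :=
        (norm_sum_le _ _).trans (Finset.sum_le_sum fun k _ => norm_mul_le _ _)
    _ ≤ ∑ _k : κ, 1 * ε := by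
        gcongr with k
        · rw [norm_star]; exact CStarRing.norm_le_one_of_star_mul_self_eq_one (hW k)
        · exact hcomm k
    _ = Fintype.card κ * ε := by simp

end CStarRing

theorem ContinuousLinearMap.ext_inner_on {𝕜 E F : Type*} [RCLike 𝕜]
    [NormedAddCommGroup E] [InnerProductSpace 𝕜 E] [NormedAddCommGroup F] [InnerProductSpace 𝕜 F]
    {S : Set E} {S' : Set F} (hS : Dense (Submodule.span 𝕜 S : Set E))
    (hS' : Dense (Submodule.span 𝕜 S' : Set F)) {T T' : E →L[𝕜] F}
    (h : ∀ t ∈ S', ∀ s ∈ S, inner 𝕜 t (T s) = inner 𝕜 t (T' s)) : T = T' := by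
  refine ContinuousLinearMap.ext_on hS fun s hs => ?_
  have : innerSL 𝕜 (T s - T' s) = 0 :=
    ContinuousLinearMap.ext_on hS' fun t ht => by
      rw [innerSL_apply_apply, inner_sub_left, ← inner_conj_symm (T s) t,
        ← inner_conj_symm (T' s) t, h t ht s hs, sub_self, zero_apply]
  rw [← sub_eq_zero, ← inner_self_eq_zero (𝕜 := 𝕜), ← innerSL_apply_apply, this, zero_apply]

theorem OrthonormalBasis.dense_span_range {𝕜 E ι : Type*} [RCLike 𝕜] [NormedAddCommGroup E]
    [InnerProductSpace 𝕜 E] [Fintype ι] (e : OrthonormalBasis ι 𝕜 E) :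
    Dense (Submodule.span 𝕜 (Set.range e) : Set E) := by
  rw [← e.coe_toBasis, e.toBasis.span_eq, Submodule.top_coe]
  exact dense_univ

section Weyl

variable {E G : Type*} [NormedAddCommGroup E] [InnerProductSpace ℂ E] [FiniteDimensional ℂ E]
  [AddCommGroup G] [Fintype G]

noncomputable def weyl (e : OrthonormalBasis G ℂ E) (a : G) (ψ : AddChar G ℂ) : E →L[ℂ] E :=
  LinearMap.toContinuousLinearMap (e.toBasis.constr ℂ fun j => ψ j • e (j + a))

theorem weyl_apply_basis (e : OrthonormalBasis G ℂ E) (a : G) (ψ : AddChar G ℂ) (j : G) :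
    weyl e a ψ (e j) = ψ j • e (j + a) := by
  rw [weyl, LinearMap.coe_toContinuousLinearMap', ← e.coe_toBasis, Module.Basis.constr_basis]

theorem inner_weyl_basis (e : OrthonormalBasis G ℂ E) (a : G) (ψ : AddChar G ℂ)
    (X : E →L[ℂ] E) (i j : G) :
    ⟪weyl e a ψ (e i), X (weyl e a ψ (e j))⟫ = ψ (j - i) * ⟪e (i + a), X (e (j + a))⟫ := by
  rw [weyl_apply_basis, weyl_apply_basis, map_smul, inner_smul_left, inner_smul_right,
    ← AddChar.map_neg_eq_conj, ← mul_assoc, ← AddChar.map_add_eq_mul, neg_add_eq_sub]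

theorem star_weyl_mul_self (e : OrthonormalBasis G ℂ E) (a : G) (ψ : AddChar G ℂ) :
    star (weyl e a ψ) * weyl e a ψ = 1 := by
  classical
  refine ContinuousLinearMap.ext_inner_on e.dense_span_range e.dense_span_range ?_
  rintro _ ⟨i, rfl⟩ _ ⟨j, rfl⟩
  have := inner_weyl_basis e a ψ 1 i j
  rw [ContinuousLinearMap.star_eq_adjoint, mul_apply_eq_comp,
    ContinuousLinearMap.adjoint_inner_right]
  simp only [one_apply_eq_self] at this ⊢
  rw [this, e.inner_eq_ite, e.inner_eq_ite]
  by_cases hij : i = j <;> simp [hij]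

theorem sum_star_weyl_mul_mul (e : OrthonormalBasis G ℂ E) (X : E →L[ℂ] E) :
    ∑ p : G × AddChar G ℂ, star (weyl e p.1 p.2) * X * weyl e p.1 p.2 =
      (Fintype.card G * LinearMap.trace ℂ E X) • 1 := by
  classical
  refine ContinuousLinearMap.ext_inner_on e.dense_span_range e.dense_span_range ?_
  rintro _ ⟨i, rfl⟩ _ ⟨j, rfl⟩
  simp only [sum_apply, ContinuousLinearMap.star_eq_adjoint,
    mul_apply_eq_comp, ContinuousLinearMap.adjoint_inner_right, inner_sum,
    inner_weyl_basis, Fintype.sum_prod_type, ← Finset.sum_mul, AddChar.sum_apply_eq_ite,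
    sub_eq_zero, smul_apply, one_apply_eq_self, inner_smul_right, e.inner_eq_ite,
    LinearMap.trace_eq_sum_inner _ e]
  by_cases hij : i = j
  · subst hij
    simp only [if_true, ← Finset.mul_sum, mul_one, ContinuousLinearMap.coe_coe]
    congr 1
    exact Fintype.sum_equiv (Equiv.addLeft i) _ _ fun _ => rfl
  · simp [hij, Ne.symm hij]

end Weyl

section Ampliation

variable {H₁ H₂ H ι : Type*}
  [NormedAddCommGroup H₁] [InnerProductSpace ℂ H₁] [CompleteSpace H₁]
  [NormedAddCommGroup H₂] [InnerProductSpace ℂ H₂]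
  [NormedAddCommGroup H] [InnerProductSpace ℂ H] [CompleteSpace H]
  [Fintype ι] {tmul : H₁ →L[ℂ] H₂ →L[ℂ] H}

/-- `1 ⊗ B` on the tensor product realized by `tmul`. -/
noncomputable def ampliation (tmul : H₁ →L[ℂ] H₂ →L[ℂ] H) (b : OrthonormalBasis ι ℂ H₂)
    (B : H₂ →L[ℂ] H₂) : H →L[ℂ] H :=
  ∑ i, tmul.flip (B (b i)) ∘L (tmul.flip (b i)).adjoint

variable (htmul : ∀ x x' y y', ⟪tmul x y, tmul x' y'⟫ = ⟪x, x'⟫ * ⟪y, y'⟫)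
include htmul

theorem adjoint_flip_apply_tmul (y : H₂) (x : H₁) (y' : H₂) :
    (tmul.flip y).adjoint (tmul x y') = ⟪y, y'⟫ • x :=
  ext_inner_left ℂ fun φ => by
    rw [ContinuousLinearMap.adjoint_inner_right, ContinuousLinearMap.flip_apply, htmul,
      inner_smul_right, mul_comm]

theorem ampliation_apply_tmul (b : OrthonormalBasis ι ℂ H₂) (B : H₂ →L[ℂ] H₂) (x : H₁) (y : H₂) :
    ampliation tmul b B (tmul x y) = tmul x (B y) := by
  conv_rhs => rw [← b.sum_repr' y, map_sum, map_sum]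
  simp only [ampliation, sum_apply, ContinuousLinearMap.comp_apply, adjoint_flip_apply_tmul htmul,
    map_smul, ContinuousLinearMap.flip_apply]

variable (hdense : Dense (Submodule.span ℂ {z : H | ∃ x y, z = tmul x y} : Set H))
include hdense

theorem star_ampliation_mul_self [CompleteSpace H₂] (b : OrthonormalBasis ι ℂ H₂) {U : H₂ →L[ℂ] H₂}
    (hU : star U * U = 1) : star (ampliation tmul b U) * ampliation tmul b U = 1 := by
  have hU' (y y' : H₂) : ⟪U y, U y'⟫ = ⟪y, y'⟫ := by
    rw [← ContinuousLinearMap.adjoint_inner_right, ← ContinuousLinearMap.star_eq_adjoint,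
      ← mul_apply_eq_comp, hU, one_apply_eq_self]
  refine ContinuousLinearMap.ext_inner_on hdense hdense ?_
  rintro _ ⟨x, y, rfl⟩ _ ⟨x', y', rfl⟩
  rw [ContinuousLinearMap.star_eq_adjoint, mul_apply_eq_comp,
    ContinuousLinearMap.adjoint_inner_right, ampliation_apply_tmul htmul,
    ampliation_apply_tmul htmul, htmul, hU', one_apply_eq_self, htmul]

theorem sum_star_ampliation_mul_mul [CompleteSpace H₂] (b : OrthonormalBasis ι ℂ H₂)
    {κ : Type*} [Fintype κ] (U : κ → H₂ →L[ℂ] H₂) (c : ℂ)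
    (hU : ∀ X : H₂ →L[ℂ] H₂, ∑ k, star (U k) * X * U k = (c * LinearMap.trace ℂ H₂ X) • 1)
    {A : H →L[ℂ] H} {A' : H₁ →L[ℂ] H₁}
    (hA' : ∀ φ ψ : H₁, ⟪φ, A' ψ⟫ =
      (Module.finrank ℂ H₂ : ℂ)⁻¹ * ∑ i, ⟪tmul φ (b i), A (tmul ψ (b i))⟫)
    {At : H →L[ℂ] H} (hAt : ∀ x y, At (tmul x y) = tmul (A' x) y)
    (hd : Module.finrank ℂ H₂ ≠ 0) :
    ∑ k, star (ampliation tmul b (U k)) * A * ampliation tmul b (U k) =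
      (c * Module.finrank ℂ H₂) • At := by
  refine ContinuousLinearMap.ext_inner_on hdense hdense ?_
  rintro _ ⟨φ, y, rfl⟩ _ ⟨ψ, y', rfl⟩
  obtain ⟨X, hX⟩ : ∃ X : H₂ →L[ℂ] H₂, ∀ y y', ⟪y, X y'⟫ = ⟪tmul φ y, A (tmul ψ y')⟫ :=
    ⟨(tmul φ).adjoint ∘L A ∘L tmul ψ, fun y y' =>
      ContinuousLinearMap.adjoint_inner_right (tmul φ) y (A (tmul ψ y'))⟩
  have htrace : LinearMap.trace ℂ H₂ X = Module.finrank ℂ H₂ * ⟪φ, A' ψ⟫ := by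
    rw [LinearMap.trace_eq_sum_inner _ b, hA', ← mul_assoc,
      mul_inv_cancel₀ (Nat.cast_ne_zero.mpr hd), one_mul]
    exact Finset.sum_congr rfl fun i _ => hX _ _
  calc ⟪tmul φ y, (∑ k, star (ampliation tmul b (U k)) * A * ampliation tmul b (U k))
        (tmul ψ y')⟫
      = ∑ k, ⟪tmul φ (U k y), A (tmul ψ (U k y'))⟫ := by
        simp only [sum_apply, inner_sum, ContinuousLinearMap.star_eq_adjoint, mul_apply_eq_comp,
          ContinuousLinearMap.adjoint_inner_right, ampliation_apply_tmul htmul]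
    _ = ⟪y, (∑ k, star (U k) * X * U k) y'⟫ := by
        simp only [sum_apply, inner_sum, ContinuousLinearMap.star_eq_adjoint, mul_apply_eq_comp,
          ContinuousLinearMap.adjoint_inner_right, hX]
    _ = ⟪tmul φ y, ((c * Module.finrank ℂ H₂) • At) (tmul ψ y')⟫ := by
        rw [hU, smul_apply, smul_apply, hAt, inner_smul_right, inner_smul_right, htmul, htrace,
          one_apply_eq_self]
        ring

end Ampliation

/-- Let `H₁, H₂` be Hilbert spaces with `H₂` finite-dimensional, realized in a Hilbert
tensor product `H` via a bounded bilinear map `tmul` whose image spans a dense subspace and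
which multiplies inner products.  If `A ∈ B(H₁⊗H₂)` satisfies `‖[A, 1⊗B]‖ ≤ ε‖B‖` for all
`B ∈ B(H₂)`, then the normalized partial trace `A' = (dim H₂)⁻¹ Tr_{H₂} A` (characterized
by its matrix elements w.r.t. an orthonormal basis of `H₂`) satisfies `‖A'⊗1 − A‖ ≤ ε`. -/
theorem normalized_partial_trace_close
    {H₁ H₂ H : Type*}
    [NormedAddCommGroup H₁] [InnerProductSpace ℂ H₁] [CompleteSpace H₁]
    [NormedAddCommGroup H₂] [InnerProductSpace ℂ H₂] [CompleteSpace H₂]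
    [NormedAddCommGroup H] [InnerProductSpace ℂ H] [CompleteSpace H]
    [FiniteDimensional ℂ H₂]
    (tmul : H₁ →L[ℂ] H₂ →L[ℂ] H)
    (htmul : ∀ (x x' : H₁) (y y' : H₂),
      (inner ℂ (tmul x y) (tmul x' y') : ℂ) = (inner ℂ x x' : ℂ) * (inner ℂ y y' : ℂ))
    (hdense : Dense (Submodule.span ℂ {z : H | ∃ x y, z = tmul x y} : Set H))
    (ε : ℝ) (hε : 0 ≤ ε)
    (A : H →L[ℂ] H)
    (hcomm : ∀ (B : H₂ →L[ℂ] H₂) (Bt : H →L[ℂ] H),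
      (∀ x y, Bt (tmul x y) = tmul x (B y)) →
      ‖A ∘L Bt - Bt ∘L A‖ ≤ ε * ‖B‖)
    {ι : Type*} [Fintype ι] (b : OrthonormalBasis ι ℂ H₂)
    (A' : H₁ →L[ℂ] H₁)
    (hA' : ∀ φ ψ : H₁, (inner ℂ φ (A' ψ) : ℂ) =
      ((Module.finrank ℂ H₂ : ℂ))⁻¹ *
        ∑ i, (inner ℂ (tmul φ (b i)) (A (tmul ψ (b i))) : ℂ))
    (At : H →L[ℂ] H)
    (hAt : ∀ x y, At (tmul x y) = tmul (A' x) y) :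
    ‖At - A‖ ≤ ε := by
  rcases eq_or_ne (Module.finrank ℂ H₂) 0 with hd | hd
  · have : Subsingleton H₂ := Module.finrank_zero_iff.mp hd
    have hAt : At = A := ContinuousLinearMap.ext_on hdense <| by
      rintro _ ⟨x, y, rfl⟩
      simp [Subsingleton.elim y 0]
    simpa [hAt] using hε
  · have : NeZero (Module.finrank ℂ H₂) := ⟨hd⟩
    let e := stdOrthonormalBasis ℂ H₂
    let W (p : Fin (Module.finrank ℂ H₂) × AddChar (Fin (Module.finrank ℂ H₂)) ℂ) : H →L[ℂ] H :=
      ampliation tmul b (weyl e p.1 p.2)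
    have hW p : star (W p) * W p = 1 :=
      star_ampliation_mul_self htmul hdense b (star_weyl_mul_self e p.1 p.2)
    have hcommW p : ‖A * W p - W p * A‖ ≤ ε :=
      calc _ ≤ ε * ‖weyl e p.1 p.2‖ := hcomm _ _ (ampliation_apply_tmul htmul b _)
        _ ≤ ε := mul_le_of_le_one_right hε
          (CStarRing.norm_le_one_of_star_mul_self_eq_one (star_weyl_mul_self e p.1 p.2))
    have hsum : ∑ p, star (W p) * A * W p =
        Fintype.card (Fin (Module.finrank ℂ H₂) × AddChar (Fin (Module.finrank ℂ H₂)) ℂ) • At := by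
      rw [sum_star_ampliation_mul_mul htmul hdense b _ _ (sum_star_weyl_mul_mul e) hA' hAt hd]
      simp [Fintype.card_prod, AddChar.card_eq, ← Nat.cast_smul_eq_nsmul ℂ]
    exact norm_sub_le_of_sum_star_mul_mul W hW hcommW hsum
end

section
/- Let H₁, H₂ be Hilbert spaces, ε ≥ 0, A ∈ B(H₁⊗H₂) with ‖[A, 1⊗B]‖ ≤ ε‖B‖ for all B ∈ B(H₂), and let ρ be a normal state on B(H₂). Then the conditional expectation Π = id ⊗ ρ satisfies ‖Π(A) ⊗ 1 − A‖ ≤ 2ε. -/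
/-!
It suffices to bound `⟪u, (Π(A) ⊗ 1 - A) v⟫` on the dense algebraic tensor product, where
`u = ∑ c_m ⊗ f_m` and `v = ∑ d_m ⊗ f_m` for a finite orthonormal family `f`. There
`⟪u, (Π(A) ⊗ 1) v⟫` is the `ρ`-average over `k` of `∑_m ⟪c_m ⊗ ξ_k, A (d_m ⊗ ξ_k)⟫`, so one has
to compare this sum with `⟪u, A v⟫` for a single unit vector `ξ`. Two commutator estimates, each
costing `ε ‖u‖ ‖v‖`, do it: replacing `ξ` by `f_m` in the `m`-th term is conjugation by
`1 ⊗ |f_m⟩⟨ξ|` (summed with Cauchy–Schwarz), and dropping the off-diagonal terms of `⟪u, A v⟫`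
is the pinching `X ↦ ∑_m P_m X P_m`, the average of `U_s X U_s` over the sign unitaries
`U_s = ∑_m s_m P_m + (1 - ∑_m P_m)`, `P_m = |f_m⟩⟨f_m|`.
-/

open ContinuousLinearMap Finset
open scoped InnerProductSpace

noncomputable section

namespace ConditionalExpectation

variable {𝕜 : Type*} [RCLike 𝕜]

theorem norm_tsum_smul_sub_le {ι E : Type*} [NormedAddCommGroup E] [NormedSpace ℝ E]
    [CompleteSpace E] {ρ : ι → ℝ} (hρ0 : ∀ k, 0 ≤ ρ k) (hρ : HasSum ρ 1) {x : ι → E}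
    {b : E} {δ : ℝ} (hx : ∀ k, ‖x k - b‖ ≤ δ) : ‖∑' k, ρ k • x k - b‖ ≤ δ := by
  have hbound : ∀ k, ‖ρ k • (x k - b)‖ ≤ ρ k * δ := fun k => by
    rw [norm_smul, Real.norm_of_nonneg (hρ0 k)]
    exact mul_le_mul_of_nonneg_left (hx k) (hρ0 k)
  have hsum : Summable fun k => ρ k • (x k - b) :=
    Summable.of_norm_bounded (hρ.summable.mul_right δ) hbound
  have hb : ∑' k, ρ k • b = b := by rw [hρ.summable.tsum_smul_const, hρ.tsum_eq, one_smul]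
  have hx : Summable fun k => ρ k • x k :=
    (hsum.add (hρ.summable.smul_const b)).congr fun k => by rw [← smul_add, sub_add_cancel]
  calc ‖∑' k, ρ k • x k - b‖ = ‖∑' k, ρ k • (x k - b)‖ := by
        simp_rw [smul_sub]; rw [hx.tsum_sub (hρ.summable.smul_const b), hb]
    _ ≤ 1 * δ := tsum_of_norm_bounded (hρ.mul_right δ) hbound
    _ = δ := one_mul δ

theorem norm_sub_le_of_sum_eq_card_smul {ι E : Type*} [Fintype ι] [Nonempty ι]
    [NormedAddCommGroup E] [NormedSpace ℝ E] {a : ι → E} {c b : E} {δ : ℝ}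
    (hsum : ∑ i, a i = Fintype.card ι • c) (ha : ∀ i, ‖a i - b‖ ≤ δ) : ‖c - b‖ ≤ δ := by
  have hcard : (0 : ℝ) < Fintype.card ι := Nat.cast_pos.mpr Fintype.card_pos
  have : Fintype.card ι * ‖c - b‖ ≤ Fintype.card ι * δ := by
    calc (Fintype.card ι : ℝ) * ‖c - b‖ = ‖∑ i, (a i - b)‖ := by
          rw [sum_sub_distrib, hsum, sum_const, card_univ, ← smul_sub, RCLike.norm_nsmul ℝ,
            nsmul_eq_mul]
      _ ≤ ∑ i, ‖a i - b‖ := norm_sum_le _ _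
      _ ≤ ∑ _i : ι, δ := sum_le_sum fun i _ => ha i
      _ = Fintype.card ι * δ := by rw [sum_const, card_univ, nsmul_eq_mul]
  exact le_of_mul_le_mul_left this hcard

theorem sum_units_mul_eq {ι : Type*} [Fintype ι] [DecidableEq ι] (i j : ι) :
    ∑ s : ι → ℤˣ, ((s i * s j : ℤˣ) : ℤ) = if i = j then (Fintype.card (ι → ℤˣ) : ℤ) else 0 := by
  split_ifs with hij
  · subst hij
    simp
  · let χ : (ι → ℤˣ) →* ℤ := (Units.coeHom ℤ).comp
      (Pi.evalMonoidHom (fun _ : ι => ℤˣ) i * Pi.evalMonoidHom (fun _ : ι => ℤˣ) j)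
    refine sum_hom_units_eq_zero χ fun hχ => ?_
    have := DFunLike.congr_fun hχ (Pi.mulSingle i (-1))
    simp [χ, Pi.mulSingle_eq_of_ne' hij] at this

theorem sum_units_sum_sum_mul {ι R : Type*} [Fintype ι] [DecidableEq ι] [Ring R]
    (X : ι → ι → R) :
    ∑ s : ι → ℤˣ, ∑ i, ∑ j, (((s i * s j : ℤˣ) : ℤ) : R) * X i j =
      Fintype.card (ι → ℤˣ) • ∑ i, X i i := by
  rw [sum_comm, smul_sum]
  refine sum_congr rfl fun i _ => ?_
  rw [sum_comm]
  simp only [← sum_mul, ← Int.cast_sum, sum_units_mul_eq, Int.cast_ite, Int.cast_natCast,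
    Int.cast_zero, ite_mul, zero_mul, sum_ite_eq, mem_univ, if_true, nsmul_eq_mul]

theorem one_add_sum_smul_mul_one_add_sum_smul {ι R A : Type*} [Fintype ι] [DecidableEq ι]
    [CommSemiring R] [Semiring A] [Algebra R A] {e : ι → A}
    (he : ∀ i j, e i * e j = if i = j then e i else 0) (a b : ι → R) :
    (1 + ∑ i, a i • e i) * (1 + ∑ i, b i • e i) = 1 + ∑ i, (a i + b i + a i * b i) • e i := by
  simp only [mul_add, add_mul, one_mul, mul_one, sum_mul_sum, smul_mul_smul_comm, he, smul_ite,
    smul_zero, sum_ite_eq, mem_univ, if_true, add_smul, sum_add_distrib]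
  abel

theorem norm_inner_apply_le {E : Type*} [NormedAddCommGroup E] [InnerProductSpace 𝕜 E]
    (T : E →L[𝕜] E) (u v : E) : ‖⟪u, T v⟫_𝕜‖ ≤ ‖T‖ * (‖u‖ * ‖v‖) :=
  calc ‖⟪u, T v⟫_𝕜‖ ≤ ‖u‖ * (‖T‖ * ‖v‖) :=
        (norm_inner_le_norm u (T v)).trans
          (mul_le_mul_of_nonneg_left (T.le_opNorm v) (norm_nonneg u))
    _ = ‖T‖ * (‖u‖ * ‖v‖) := by ring

theorem opNorm_le_of_inner_le_of_dense {E : Type*} [NormedAddCommGroup E]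
    [InnerProductSpace 𝕜 E] {s : Set E} (hs : Dense s) (T : E →L[𝕜] E) {C : ℝ} (hC : 0 ≤ C)
    (h : ∀ u ∈ s, ∀ v ∈ s, ‖⟪u, T v⟫_𝕜‖ ≤ C * (‖u‖ * ‖v‖)) : ‖T‖ ≤ C := by
  have hall : ∀ p : E × E, ‖⟪p.1, T p.2⟫_𝕜‖ ≤ C * (‖p.1‖ * ‖p.2‖) :=
    (hs.prod hs).induction (fun p hp => h _ hp.1 _ hp.2) (isClosed_le (by fun_prop) (by fun_prop))
  refine opNorm_le_bound T hC fun v => ?_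
  rcases (norm_nonneg (T v)).eq_or_lt with hTv | hTv
  · rw [← hTv]; positivity
  have := hall (T v, v)
  rw [inner_self_eq_norm_sq_to_K, norm_pow, RCLike.norm_ofReal, abs_norm] at this
  nlinarith

theorem norm_inner_map_map_sub_le {E : Type*} [NormedAddCommGroup E] [InnerProductSpace 𝕜 E]
    [CompleteSpace E] {U : E →L[𝕜] E} (hU : adjoint U ∘L U = 1) (A : E →L[𝕜] E) (u v : E) :
    ‖⟪U u, A (U v)⟫_𝕜 - ⟪u, A v⟫_𝕜‖ ≤ ‖A ∘L U - U ∘L A‖ * (‖u‖ * ‖v‖) := by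
  have hinner : ⟪U u, U (A v)⟫_𝕜 = ⟪u, A v⟫_𝕜 := (inner_map_map_iff_adjoint_comp_self U).mpr hU _ _
  have hnorm : ‖U u‖ = ‖u‖ := (norm_map_iff_adjoint_comp_self U).mpr hU u
  calc ‖⟪U u, A (U v)⟫_𝕜 - ⟪u, A v⟫_𝕜‖ = ‖⟪U u, (A ∘L U - U ∘L A) v⟫_𝕜‖ := by
        rw [sub_apply, inner_sub_right, comp_apply, comp_apply, hinner]
    _ ≤ ‖A ∘L U - U ∘L A‖ * (‖U u‖ * ‖v‖) := norm_inner_apply_le _ _ _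
    _ = ‖A ∘L U - U ∘L A‖ * (‖u‖ * ‖v‖) := by rw [hnorm]

section SimpleTensors

variable {H₁ H₂ H : Type*}
  [NormedAddCommGroup H₁] [InnerProductSpace 𝕜 H₁]
  [NormedAddCommGroup H₂] [InnerProductSpace 𝕜 H₂]
  [NormedAddCommGroup H] [InnerProductSpace 𝕜 H]
  {ι : Type*} [Fintype ι] {tmul : H₁ →L[𝕜] H₂ →L[𝕜] H}

theorem span_tmul_mono {K K' : Submodule 𝕜 H₂} (h : K ≤ K') :
    Submodule.span 𝕜 {z | ∃ x, ∃ y ∈ K, z = tmul x y} ≤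
      Submodule.span 𝕜 {z | ∃ x, ∃ y ∈ K', z = tmul x y} :=
  Submodule.span_mono fun _ ⟨x, y, hy, hz⟩ => ⟨x, y, h hy, hz⟩

theorem exists_finiteDimensional_mem_span_tmul {u : H}
    (hu : u ∈ Submodule.span 𝕜 {z | ∃ x y, z = tmul x y}) :
    ∃ K : Submodule 𝕜 H₂, FiniteDimensional 𝕜 K ∧
      u ∈ Submodule.span 𝕜 {z | ∃ x, ∃ y ∈ K, z = tmul x y} := by
  induction hu using Submodule.span_induction with
  | mem z hz =>
    obtain ⟨x, y, rfl⟩ := hz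
    exact ⟨𝕜 ∙ y, inferInstance,
      Submodule.subset_span ⟨x, y, Submodule.mem_span_singleton_self y, rfl⟩⟩
  | zero => exact ⟨⊥, inferInstance, zero_mem _⟩
  | add u v _ _ hu hv =>
    obtain ⟨K, _, hK⟩ := hu
    obtain ⟨K', _, hK'⟩ := hv
    exact ⟨K ⊔ K', inferInstance, add_mem (span_tmul_mono le_sup_left hK)
      (span_tmul_mono le_sup_right hK')⟩
  | smul a u _ hu =>
    obtain ⟨K, hK, hu⟩ := hu
    exact ⟨K, hK, Submodule.smul_mem _ a hu⟩

theorem exists_sum_tmul_of_mem_span (K : Submodule 𝕜 H₂) [FiniteDimensional 𝕜 K] {u : H}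
    (hu : u ∈ Submodule.span 𝕜 {z | ∃ x, ∃ y ∈ K, z = tmul x y}) :
    ∃ c : Fin (Module.finrank 𝕜 K) → H₁, u = ∑ m, tmul (c m) (stdOrthonormalBasis 𝕜 K m) := by
  set b := stdOrthonormalBasis 𝕜 K
  let Φ : (Fin (Module.finrank 𝕜 K) → H₁) →ₗ[𝕜] H :=
    ∑ m, (tmul.flip (b m : H₂)).toLinearMap ∘ₗ LinearMap.proj m
  have hΦ (c) : Φ c = ∑ m, tmul (c m) (b m) := by simp [Φ]
  suffices u ∈ LinearMap.range Φ by
    obtain ⟨c, rfl⟩ := this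
    exact ⟨c, hΦ c⟩
  refine Submodule.span_le.mpr ?_ hu
  rintro z ⟨x, y, hy, rfl⟩
  refine ⟨fun m => ⟪(b m : H₂), y⟫_𝕜 • x, ?_⟩
  have hy' : ∑ m, ⟪(b m : H₂), y⟫_𝕜 • (b m : H₂) = y := by
    simpa using congrArg (Submodule.subtype K) (b.sum_repr' ⟨y, hy⟩)
  rw [hΦ]
  conv_rhs => rw [← hy', map_sum]
  simp only [map_smul, smul_apply]

theorem exists_orthonormal_sum_tmul {u v : H}
    (hu : u ∈ Submodule.span 𝕜 {z | ∃ x y, z = tmul x y})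
    (hv : v ∈ Submodule.span 𝕜 {z | ∃ x y, z = tmul x y}) :
    ∃ (n : ℕ) (f : Fin n → H₂) (c d : Fin n → H₁), Orthonormal 𝕜 f ∧
      u = ∑ m, tmul (c m) (f m) ∧ v = ∑ m, tmul (d m) (f m) := by
  obtain ⟨K, _, hK⟩ := exists_finiteDimensional_mem_span_tmul hu
  obtain ⟨K', _, hK'⟩ := exists_finiteDimensional_mem_span_tmul hv
  obtain ⟨c, hc⟩ := exists_sum_tmul_of_mem_span (K ⊔ K') (span_tmul_mono le_sup_left hK)
  obtain ⟨d, hd⟩ := exists_sum_tmul_of_mem_span (K ⊔ K') (span_tmul_mono le_sup_right hK')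
  exact ⟨_, _, c, d, (stdOrthonormalBasis 𝕜 ↥(K ⊔ K')).orthonormal.comp_linearIsometry
    (K ⊔ K').subtypeₗᵢ, hc, hd⟩

theorem inner_lsmul_lsmul (a b : 𝕜) (y y' : H₂) :
    ⟪lsmul 𝕜 𝕜 a y, lsmul 𝕜 𝕜 b y'⟫_𝕜 = ⟪a, b⟫_𝕜 * ⟪y, y'⟫_𝕜 := by
  simp only [lsmul_apply, inner_smul_left, inner_smul_right, RCLike.inner_apply]
  ring

section Operators

variable [CompleteSpace H₁] [CompleteSpace H]

/-- On simple tensors `rankOneOp tmul g h` acts as `1 ⊗ |g⟩⟨h|`; for `tmul = lsmul 𝕜 𝕜` it is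
the rank-one operator `|g⟩⟨h|` on `H₂` itself. -/
def rankOneOp (tmul : H₁ →L[𝕜] H₂ →L[𝕜] H) (g h : H₂) : H →L[𝕜] H :=
  tmul.flip g ∘L adjoint (tmul.flip h)

theorem adjoint_rankOneOp (g h : H₂) : adjoint (rankOneOp tmul g h) = rankOneOp tmul h g := by
  rw [rankOneOp, adjoint_comp, adjoint_adjoint, rankOneOp]

/-- For orthonormal `f`, the operator `1 ⊗ U_s`, where the self-adjoint unitary `U_s` multiplies
`f m` by the sign `s m` and fixes the orthogonal complement of the `f m`. -/
def signOp (tmul : H₁ →L[𝕜] H₂ →L[𝕜] H) (f : ι → H₂) (s : ι → ℤˣ) : H →L[𝕜] H :=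
  1 + ∑ m, (((s m : ℤ) : 𝕜) - 1) • rankOneOp tmul (f m) (f m)

theorem adjoint_signOp (f : ι → H₂) (s : ι → ℤˣ) : adjoint (signOp tmul f s) = signOp tmul f s := by
  simp only [signOp, map_add, map_sum, LinearIsometryEquiv.map_smulₛₗ, adjoint_one,
    adjoint_rankOneOp, map_sub, map_intCast, map_one]

end Operators

variable (htmul : ∀ x x' y y', ⟪tmul x y, tmul x' y'⟫_𝕜 = ⟪x, x'⟫_𝕜 * ⟪y, y'⟫_𝕜)
include htmul

theorem norm_tmul (x : H₁) (y : H₂) : ‖tmul x y‖ = ‖x‖ * ‖y‖ := by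
  have h := htmul x x y y
  simp only [inner_self_eq_norm_sq_to_K] at h
  rw [← mul_pow] at h
  exact (pow_left_inj₀ (norm_nonneg _) (by positivity) two_ne_zero).mp (by exact_mod_cast h)

theorem inner_sum_tmul {f : ι → H₂} (hf : Orthonormal 𝕜 f) (c d : ι → H₁) :
    ⟪∑ m, tmul (c m) (f m), ∑ m, tmul (d m) (f m)⟫_𝕜 = ∑ m, ⟪c m, d m⟫_𝕜 := by
  classical
  simp [sum_inner, inner_sum, htmul, orthonormal_iff_ite.mp hf]

theorem norm_sum_tmul {f : ι → H₂} (hf : Orthonormal 𝕜 f) (c : ι → H₁) :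
    ‖∑ m, tmul (c m) (f m)‖ = √(∑ m, ‖c m‖ ^ 2) := by
  have h := inner_sum_tmul htmul hf c c
  simp only [inner_self_eq_norm_sq_to_K] at h
  rw [eq_comm, Real.sqrt_eq_iff_eq_sq (by positivity) (norm_nonneg _)]
  exact_mod_cast h.symm

theorem inner_sum_tmul_apply_eq_tsum {κ : Type*} {ρ : κ → ℝ} (hρ : Summable ρ) {ξ : κ → H₂}
    (hξ : ∀ k, ‖ξ k‖ = 1) (A : H →L[𝕜] H) {P : H₁ →L[𝕜] H₁}
    (hP : ∀ φ ψ, ⟪φ, P ψ⟫_𝕜 = ∑' k, (ρ k : 𝕜) * ⟪tmul φ (ξ k), A (tmul ψ (ξ k))⟫_𝕜)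
    {Pt : H →L[𝕜] H} (hPt : ∀ x y, Pt (tmul x y) = tmul (P x) y) {f : ι → H₂}
    (hf : Orthonormal 𝕜 f) (c d : ι → H₁) :
    ⟪∑ m, tmul (c m) (f m), Pt (∑ m, tmul (d m) (f m))⟫_𝕜 =
      ∑' k, ρ k • ∑ m, ⟪tmul (c m) (ξ k), A (tmul (d m) (ξ k))⟫_𝕜 := by
  have hsummable (m : ι) :
      Summable fun k => (ρ k : 𝕜) * ⟪tmul (c m) (ξ k), A (tmul (d m) (ξ k))⟫_𝕜 := by
    refine Summable.of_norm_bounded (hρ.abs.mul_right (‖A‖ * (‖c m‖ * ‖d m‖))) fun k => ?_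
    rw [norm_mul, RCLike.norm_ofReal]
    refine mul_le_mul_of_nonneg_left ((norm_inner_apply_le _ _ _).trans_eq ?_) (abs_nonneg _)
    rw [norm_tmul htmul, norm_tmul htmul, hξ, mul_one, mul_one]
  rw [map_sum, sum_congr rfl fun m _ => hPt (d m) (f m), inner_sum_tmul htmul hf,
    sum_congr rfl fun m _ => hP (c m) (d m), ← Summable.tsum_finsetSum fun m _ => hsummable m]
  simp only [← mul_sum, RCLike.real_smul_eq_coe_mul]

variable [CompleteSpace H₁] [CompleteSpace H]

theorem adjoint_flip_comp_flip (g h : H₂) :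
    adjoint (tmul.flip g) ∘L tmul.flip h = ⟪g, h⟫_𝕜 • ContinuousLinearMap.id 𝕜 H₁ := by
  ext x
  refine ext_inner_left 𝕜 fun z => ?_
  simp [adjoint_inner_right, htmul, inner_smul_right, mul_comm]

theorem adjoint_flip_tmul (g : H₂) (x : H₁) (y : H₂) :
    adjoint (tmul.flip g) (tmul x y) = ⟪g, y⟫_𝕜 • x := by
  simpa using DFunLike.congr_fun (adjoint_flip_comp_flip htmul g y) x

theorem rankOneOp_apply_tmul (g h : H₂) (x : H₁) (y : H₂) :
    rankOneOp tmul g h (tmul x y) = ⟪h, y⟫_𝕜 • tmul x g := by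
  rw [rankOneOp, comp_apply, adjoint_flip_tmul htmul, map_smul, flip_apply]

theorem rankOneOp_comp_rankOneOp (g h g' h' : H₂) :
    rankOneOp tmul g h ∘L rankOneOp tmul g' h' = ⟪h, g'⟫_𝕜 • rankOneOp tmul g h' := by
  rw [rankOneOp, rankOneOp, rankOneOp, comp_assoc, ← comp_assoc _ _ (adjoint _),
    adjoint_flip_comp_flip htmul, smul_comp, comp_smul, id_comp]

theorem norm_rankOneOp_le (g h : H₂) : ‖rankOneOp tmul g h‖ ≤ ‖g‖ * ‖h‖ := by
  have hflip (g : H₂) : ‖tmul.flip g‖ ≤ ‖g‖ :=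
    opNorm_le_bound _ (norm_nonneg g) fun x => by
      rw [flip_apply, norm_tmul htmul, mul_comm]
  calc ‖rankOneOp tmul g h‖ ≤ ‖tmul.flip g‖ * ‖adjoint (tmul.flip h)‖ := opNorm_comp_le _ _
    _ ≤ ‖g‖ * ‖h‖ := by
      rw [LinearIsometryEquiv.norm_map]
      exact mul_le_mul (hflip g) (hflip h) (norm_nonneg _) (norm_nonneg _)

omit htmul in
theorem rankOneOp_lsmul_apply [CompleteSpace H₂] (g h y : H₂) :
    rankOneOp (lsmul 𝕜 𝕜) g h y = ⟪h, y⟫_𝕜 • g := by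
  simpa using rankOneOp_apply_tmul inner_lsmul_lsmul g h (1 : 𝕜) y

theorem rankOneOp_apply_tmul_eq [CompleteSpace H₂] (g h : H₂) (x : H₁) (y : H₂) :
    rankOneOp tmul g h (tmul x y) = tmul x (rankOneOp (lsmul 𝕜 𝕜) g h y) := by
  rw [rankOneOp_apply_tmul htmul, rankOneOp_lsmul_apply, map_smul]


theorem signOp_mul_self [DecidableEq ι] {f : ι → H₂} (hf : Orthonormal 𝕜 f) (s : ι → ℤˣ) :
    signOp tmul f s * signOp tmul f s = 1 := by
  have hR (m m' : ι) : rankOneOp tmul (f m) (f m) * rankOneOp tmul (f m') (f m') =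
      if m = m' then rankOneOp tmul (f m) (f m) else 0 := by
    rw [ContinuousLinearMap.mul_def, rankOneOp_comp_rankOneOp htmul, orthonormal_iff_ite.mp hf]
    split_ifs with h <;> simp [h]
  have hs (m : ι) : ((s m : ℤ) : 𝕜) * (s m : ℤ) = 1 := mod_cast Int.units_coe_mul_self (s m)
  rw [signOp, one_add_sum_smul_mul_one_add_sum_smul hR, add_eq_left]
  refine sum_eq_zero fun m _ => ?_
  convert zero_smul 𝕜 (rankOneOp tmul (f m) (f m))
  linear_combination hs m

theorem adjoint_signOp_comp_self [DecidableEq ι] {f : ι → H₂} (hf : Orthonormal 𝕜 f)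
    (s : ι → ℤˣ) : adjoint (signOp tmul f s) ∘L signOp tmul f s = 1 := by
  rw [adjoint_signOp]
  exact signOp_mul_self htmul hf s

theorem norm_signOp_le [DecidableEq ι] {f : ι → H₂} (hf : Orthonormal 𝕜 f) (s : ι → ℤˣ) :
    ‖signOp tmul f s‖ ≤ 1 :=
  opNorm_le_bound _ zero_le_one fun x => by
    rw [(norm_map_iff_adjoint_comp_self _).mpr (adjoint_signOp_comp_self htmul hf s), one_mul]

theorem signOp_apply_tmul [CompleteSpace H₂] (f : ι → H₂) (s : ι → ℤˣ) (x : H₁) (y : H₂) :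
    signOp tmul f s (tmul x y) = tmul x (signOp (lsmul 𝕜 𝕜) f s y) := by
  simp only [signOp, add_apply, one_apply_eq_self, _root_.sum_apply, smul_apply,
    rankOneOp_apply_tmul_eq htmul, map_add, map_sum, map_smul]

theorem signOp_apply_sum_tmul [DecidableEq ι] {f : ι → H₂} (hf : Orthonormal 𝕜 f) (s : ι → ℤˣ)
    (c : ι → H₁) :
    signOp tmul f s (∑ m, tmul (c m) (f m)) = ∑ m, ((s m : ℤ) : 𝕜) • tmul (c m) (f m) := by
  refine (map_sum _ _ _).trans (sum_congr rfl fun m _ => ?_)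
  simp only [signOp, add_apply, one_apply_eq_self, _root_.sum_apply, smul_apply,
    rankOneOp_apply_tmul htmul, orthonormal_iff_ite.mp hf, ite_smul, one_smul, zero_smul,
    smul_ite, smul_zero, sum_ite_eq', mem_univ, if_true]
  rw [sub_smul, one_smul, add_sub_cancel]

theorem inner_signOp_sum_tmul [DecidableEq ι] {f : ι → H₂} (hf : Orthonormal 𝕜 f)
    (s : ι → ℤˣ) (A : H →L[𝕜] H) (c d : ι → H₁) :
    ⟪signOp tmul f s (∑ m, tmul (c m) (f m)), A (signOp tmul f s (∑ m, tmul (d m) (f m)))⟫_𝕜 =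
      ∑ m, ∑ m', (((s m * s m' : ℤˣ) : ℤ) : 𝕜) * ⟪tmul (c m) (f m), A (tmul (d m') (f m'))⟫_𝕜 := by
  simp only [signOp_apply_sum_tmul htmul hf, map_sum, map_smul, sum_inner, inner_sum,
    inner_smul_left, inner_smul_right, map_intCast, Units.val_mul, Int.cast_mul, mul_sum]
  rw [sum_comm]
  exact sum_congr rfl fun m _ => sum_congr rfl fun m' _ => by ring

variable [CompleteSpace H₂] {A : H →L[𝕜] H} {ε : ℝ} (hε : 0 ≤ ε)
  (hcomm : ∀ (B : H₂ →L[𝕜] H₂) (Bt : H →L[𝕜] H), (∀ x y, Bt (tmul x y) = tmul x (B y)) →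
    ‖A ∘L Bt - Bt ∘L A‖ ≤ ε * ‖B‖)
include hε hcomm

theorem norm_inner_tmul_sub_inner_tmul_le {ξ η : H₂} (hξ : ‖ξ‖ = 1) (hη : ‖η‖ = 1) (a b : H₁) :
    ‖⟪tmul a ξ, A (tmul b ξ)⟫_𝕜 - ⟪tmul a η, A (tmul b η)⟫_𝕜‖ ≤ ε * (‖a‖ * ‖b‖) := by
  set T := rankOneOp tmul η ξ
  have hT : T (tmul b ξ) = tmul b η := by
    rw [rankOneOp_apply_tmul htmul, inner_self_eq_norm_sq_to_K, hξ]; simp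
  have hT' : adjoint T (tmul a η) = tmul a ξ := by
    rw [adjoint_rankOneOp, rankOneOp_apply_tmul htmul, inner_self_eq_norm_sq_to_K, hη]; simp
  have hcommT : ‖A ∘L T - T ∘L A‖ ≤ ε :=
    calc ‖A ∘L T - T ∘L A‖ ≤ ε * ‖rankOneOp (lsmul 𝕜 𝕜) η ξ‖ :=
          hcomm _ T (rankOneOp_apply_tmul_eq htmul η ξ)
      _ ≤ ε * (‖η‖ * ‖ξ‖) :=
          mul_le_mul_of_nonneg_left (norm_rankOneOp_le inner_lsmul_lsmul η ξ) hε
      _ = ε := by rw [hξ, hη, mul_one, mul_one]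
  calc ‖⟪tmul a ξ, A (tmul b ξ)⟫_𝕜 - ⟪tmul a η, A (tmul b η)⟫_𝕜‖
      = ‖⟪tmul a η, (A ∘L T - T ∘L A) (tmul b ξ)⟫_𝕜‖ := by
        rw [sub_apply, inner_sub_right, comp_apply, comp_apply, hT, ← adjoint_inner_left T, hT',
          norm_sub_rev]
    _ ≤ ε * (‖tmul a η‖ * ‖tmul b ξ‖) :=
        (norm_inner_apply_le _ _ _).trans (mul_le_mul_of_nonneg_right hcommT (by positivity))
    _ = ε * (‖a‖ * ‖b‖) := by rw [norm_tmul htmul, norm_tmul htmul, hξ, hη, mul_one, mul_one]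

theorem norm_sum_inner_tmul_sub_inner_le [DecidableEq ι] {f : ι → H₂} (hf : Orthonormal 𝕜 f)
    (c d : ι → H₁) :
    ‖∑ m, ⟪tmul (c m) (f m), A (tmul (d m) (f m))⟫_𝕜 -
        ⟪∑ m, tmul (c m) (f m), A (∑ m, tmul (d m) (f m))⟫_𝕜‖ ≤
      ε * (‖∑ m, tmul (c m) (f m)‖ * ‖∑ m, tmul (d m) (f m)‖) := by
  have hsum : ∑ s : ι → ℤˣ, ⟪signOp tmul f s (∑ m, tmul (c m) (f m)),
        A (signOp tmul f s (∑ m, tmul (d m) (f m)))⟫_𝕜 =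
      Fintype.card (ι → ℤˣ) • ∑ m, ⟪tmul (c m) (f m), A (tmul (d m) (f m))⟫_𝕜 := by
    simp only [inner_signOp_sum_tmul htmul hf]
    exact sum_units_sum_sum_mul _
  refine norm_sub_le_of_sum_eq_card_smul hsum fun s => ?_
  refine (norm_inner_map_map_sub_le (adjoint_signOp_comp_self htmul hf s) A _ _).trans ?_
  refine mul_le_mul_of_nonneg_right ?_ (by positivity)
  calc ‖A ∘L signOp tmul f s - signOp tmul f s ∘L A‖
      ≤ ε * ‖signOp (lsmul 𝕜 𝕜) f s‖ := hcomm _ _ (signOp_apply_tmul htmul f s)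
    _ ≤ ε * 1 := mul_le_mul_of_nonneg_left (norm_signOp_le inner_lsmul_lsmul hf s) hε
    _ = ε := mul_one ε

theorem norm_sum_inner_slice_sub_inner_le [DecidableEq ι] {f : ι → H₂} (hf : Orthonormal 𝕜 f)
    {ξ : H₂} (hξ : ‖ξ‖ = 1) (c d : ι → H₁) :
    ‖∑ m, ⟪tmul (c m) ξ, A (tmul (d m) ξ)⟫_𝕜 -
        ⟪∑ m, tmul (c m) (f m), A (∑ m, tmul (d m) (f m))⟫_𝕜‖ ≤
      2 * ε * (‖∑ m, tmul (c m) (f m)‖ * ‖∑ m, tmul (d m) (f m)‖) := by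
  have hu := norm_sum_tmul htmul hf c
  have hv := norm_sum_tmul htmul hf d
  set u := ∑ m, tmul (c m) (f m)
  set v := ∑ m, tmul (d m) (f m)
  have hslice : ‖∑ m, (⟪tmul (c m) ξ, A (tmul (d m) ξ)⟫_𝕜 -
      ⟪tmul (c m) (f m), A (tmul (d m) (f m))⟫_𝕜)‖ ≤ ε * (‖u‖ * ‖v‖) :=
    calc _ ≤ ∑ m, ε * (‖c m‖ * ‖d m‖) := (norm_sum_le _ _).trans <| sum_le_sum fun m _ =>
          norm_inner_tmul_sub_inner_tmul_le htmul hε hcomm hξ (hf.1 m) (c m) (d m)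
      _ ≤ ε * (‖u‖ * ‖v‖) := by
          rw [← mul_sum, hu, hv]
          exact mul_le_mul_of_nonneg_left (Real.sum_mul_le_sqrt_mul_sqrt _ _ _) hε
  calc _ = ‖∑ m, (⟪tmul (c m) ξ, A (tmul (d m) ξ)⟫_𝕜 -
          ⟪tmul (c m) (f m), A (tmul (d m) (f m))⟫_𝕜) +
        (∑ m, ⟪tmul (c m) (f m), A (tmul (d m) (f m))⟫_𝕜 - ⟪u, A v⟫_𝕜)‖ := by
        rw [sum_sub_distrib, sub_add_sub_cancel]
    _ ≤ ε * (‖u‖ * ‖v‖) + ε * (‖u‖ * ‖v‖) := (norm_add_le _ _).trans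
        (add_le_add hslice (norm_sum_inner_tmul_sub_inner_le htmul hε hcomm hf c d))
    _ = 2 * ε * (‖u‖ * ‖v‖) := by ring

end SimpleTensors

end ConditionalExpectation

end

open ConditionalExpectation

/-- Let `ρ` be a normal state on `B(H₂)`, given by a density matrix
`ρ = ∑_k ρ_k |ξ_k⟩⟨ξ_k|` with `ρ_k ≥ 0`, `∑ ρ_k = 1` and `(ξ_k)` orthonormal.  If
`A ∈ B(H₁⊗H₂)` satisfies `‖[A, 1⊗B]‖ ≤ ε‖B‖` for all `B ∈ B(H₂)`, then the conditional
expectation `Π(A) = (id ⊗ ρ)(A) = ∑_k ρ_k A_{ξ_k}` satisfies `‖Π(A)⊗1 − A‖ ≤ 2ε`. -/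
theorem conditional_expectation_close
    {H₁ H₂ H : Type*}
    [NormedAddCommGroup H₁] [InnerProductSpace ℂ H₁] [CompleteSpace H₁]
    [NormedAddCommGroup H₂] [InnerProductSpace ℂ H₂] [CompleteSpace H₂]
    [NormedAddCommGroup H] [InnerProductSpace ℂ H] [CompleteSpace H]
    (tmul : H₁ →L[ℂ] H₂ →L[ℂ] H)
    (htmul : ∀ (x x' : H₁) (y y' : H₂),
      (inner ℂ (tmul x y) (tmul x' y') : ℂ) = (inner ℂ x x' : ℂ) * (inner ℂ y y' : ℂ))
    (hdense : Dense (Submodule.span ℂ {z : H | ∃ x y, z = tmul x y} : Set H))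
    (ε : ℝ) (hε : 0 ≤ ε)
    (A : H →L[ℂ] H)
    (hcomm : ∀ (B : H₂ →L[ℂ] H₂) (Bt : H →L[ℂ] H),
      (∀ x y, Bt (tmul x y) = tmul x (B y)) →
      ‖A ∘L Bt - Bt ∘L A‖ ≤ ε * ‖B‖)
    (ρ : ℕ → ℝ) (hρpos : ∀ k, 0 ≤ ρ k) (hρsummable : Summable ρ)
    (hρsum : ∑' k, ρ k = 1)
    (ξ : ℕ → H₂) (hortho : Orthonormal ℂ ξ)
    (PiA : H₁ →L[ℂ] H₁)
    (hPiA : ∀ φ ψ : H₁, (inner ℂ φ (PiA ψ) : ℂ) =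
      ∑' k, (ρ k : ℂ) * (inner ℂ (tmul φ (ξ k)) (A (tmul ψ (ξ k))) : ℂ))
    (PiAt : H →L[ℂ] H)
    (hPiAt : ∀ x y, PiAt (tmul x y) = tmul (PiA x) y) :
    ‖PiAt - A‖ ≤ 2 * ε := by
  refine opNorm_le_of_inner_le_of_dense hdense _ (by positivity) fun u hu v hv => ?_
  obtain ⟨n, f, c, d, hf, rfl, rfl⟩ := exists_orthonormal_sum_tmul hu hv
  rw [sub_apply, inner_sub_right,
    inner_sum_tmul_apply_eq_tsum htmul hρsummable hortho.1 A hPiA hPiAt hf]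
  exact norm_tsum_smul_sub_le hρpos (hρsum ▸ hρsummable.hasSum) fun k =>
    norm_sum_inner_slice_sub_inner_le htmul hε hcomm hf (hortho.1 k) c d
end

section
/- Under the hypotheses of the preceding statement, the unique solution U(s) of the linear ODE −i dU/ds = D(s) U(s), U(0) = 1, is unitary for each s and satisfies P(s) = U(s) P(0) U(s)*. -/
/-!
Conjugating back by the propagator removes the flow: if `U' = i D U` with `D` self-adjoint and
`P' = i [D, P]`, the derivative of `U* P U` is `-i U* D P U + i U* (D P - P D) U + i U* P D U = 0`,
so `U(s)* P(s) U(s) = P(0)`. With `P = 1` this gives `U* U = 1`, and in finite dimension a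
one-sided inverse is two-sided, so `U` is unitary and `P(s) = U(s) P(0) U(s)*`.
-/

instance ContinuousLinearMap.isDedekindFiniteMonoid {R M : Type*} [Semiring R]
    [TopologicalSpace M] [AddCommMonoid M] [ContinuousAdd M] [Module R M]
    [IsDedekindFiniteMonoid (Module.End R M)] : IsDedekindFiniteMonoid (M →L[R] M) :=
  .of_injective ContinuousLinearMap.toLinearMapRingHom ContinuousLinearMap.coe_injective

theorem eq_mul_mul_star_of_star_mul_mul_eq {A : Type*} [Monoid A] [Star A] {U P Q : A}
    (hU : U * star U = 1) (h : star U * P * U = Q) : P = U * Q * star U := by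
  rw [← h, ← mul_assoc, ← mul_assoc, hU, one_mul, mul_assoc, hU, mul_one]

section Conjugation

variable {A : Type*} [NormedRing A] [NormedAlgebra ℂ A] [StarRing A] [StarModule ℂ A]
  [ContinuousStar A]

theorem HasDerivAt.star_of_I_smul_mul {D U : ℝ → A} {s : ℝ}
    (hD : IsSelfAdjoint (D s)) (hU : HasDerivAt U (Complex.I • (D s * U s)) s) :
    HasDerivAt (fun t => star (U t)) (-Complex.I • (star (U s) * D s)) s := by
  simpa [star_smul, hD.star_eq] using hU.star

theorem star_mul_mul_eq_of_hasDerivAt {D P U : ℝ → A}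
    (hD : ∀ s, IsSelfAdjoint (D s))
    (hP : ∀ s, HasDerivAt P (Complex.I • (D s * P s - P s * D s)) s)
    (hU : ∀ s, HasDerivAt U (Complex.I • (D s * U s)) s) (s : ℝ) :
    star (U s) * P s * U s = star (U 0) * P 0 * U 0 := by
  have hconj (t : ℝ) : HasDerivAt (fun t => star (U t) * P t * U t) 0 t := by
    refine ((((hU t).star_of_I_smul_mul (hD t)).mul (hP t)).mul (hU t)).congr_deriv ?_
    simp only [Pi.mul_apply, smul_mul_assoc, mul_smul_comm, mul_assoc, mul_sub, sub_mul, add_mul]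
    module
  exact is_const_of_deriv_eq_zero (fun t => (hconj t).differentiableAt)
    (fun t => (hconj t).deriv) s 0

theorem star_mul_self_eq_of_hasDerivAt {D U : ℝ → A} (hD : ∀ s, IsSelfAdjoint (D s))
    (hU : ∀ s, HasDerivAt U (Complex.I • (D s * U s)) s) (s : ℝ) :
    star (U s) * U s = star (U 0) * U 0 := by
  simpa using star_mul_mul_eq_of_hasDerivAt hD (P := fun _ => 1)
    (fun _ => by simpa using hasDerivAt_const _ (1 : A)) hU s

end Conjugation

theorem spectral_flow_conjugates_projections_general
    {E : Type*} [NormedAddCommGroup E] [InnerProductSpace ℂ E] [FiniteDimensional ℂ E]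
    (D : ℝ → E →L[ℂ] E) (hDsa : ∀ s, IsSelfAdjoint (D s))
    (P P' : ℝ → E →L[ℂ] E)
    (hPderiv : ∀ s, HasDerivAt P (P' s) s)
    (hP' : ∀ s, P' s = Complex.I • (D s ∘L P s - P s ∘L D s))
    (U : ℝ → E →L[ℂ] E) (hU0 : U 0 = 1)
    (hUderiv : ∀ s, HasDerivAt U (Complex.I • (D s ∘L U s)) s) :
    ∀ s : ℝ,
      U s ∘L ContinuousLinearMap.adjoint (U s) = 1 ∧
      ContinuousLinearMap.adjoint (U s) ∘L U s = 1 ∧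
      P s = U s ∘L P 0 ∘L ContinuousLinearMap.adjoint (U s) := by
  intro s
  have hUU : star (U s) * U s = 1 := by
    simpa [hU0] using star_mul_self_eq_of_hasDerivAt hDsa hUderiv s
  have hUU' : U s * star (U s) = 1 := mul_eq_one_comm.mp hUU
  have hPU : star (U s) * P s * U s = P 0 := by
    simpa [hU0] using star_mul_mul_eq_of_hasDerivAt hDsa (fun t => hP' t ▸ hPderiv t) hUderiv s
  exact ⟨hUU', hUU, eq_mul_mul_star_of_star_mul_mul_eq hUU' hPU⟩

/-- Under the hypotheses of the quasi-adiabatic construction (`D(s)` bounded self-adjoint,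
continuous in `s`, with `P'(s) = i[D(s), P(s)]` for a differentiable family of orthogonal
projections `P(s)`), the unique solution `U(s)` of `-i dU/ds = D(s) U(s)`, `U(0) = 1`,
is unitary for each `s` and satisfies `P(s) = U(s) P(0) U(s)*`. -/
theorem spectral_flow_conjugates_projections
    {E : Type*} [NormedAddCommGroup E] [InnerProductSpace ℂ E] [FiniteDimensional ℂ E]
    (D : ℝ → E →L[ℂ] E) (hDsa : ∀ s, IsSelfAdjoint (D s)) (hDcont : Continuous D)
    (P P' : ℝ → E →L[ℂ] E)
    (hproj : ∀ s, P s ∘L P s = P s)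
    (hPsa : ∀ s, IsSelfAdjoint (P s))
    (hPderiv : ∀ s, HasDerivAt P (P' s) s)
    (hP' : ∀ s, P' s = Complex.I • (D s ∘L P s - P s ∘L D s))
    (U : ℝ → E →L[ℂ] E) (hU0 : U 0 = 1)
    (hUderiv : ∀ s, HasDerivAt U (Complex.I • (D s ∘L U s)) s) :
    ∀ s : ℝ,
      U s ∘L ContinuousLinearMap.adjoint (U s) = 1 ∧
      ContinuousLinearMap.adjoint (U s) ∘L U s = 1 ∧
      P s = U s ∘L P 0 ∘L ContinuousLinearMap.adjoint (U s) :=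
  spectral_flow_conjugates_projections_general D hDsa P P' hPderiv hP' U hU0 hUderiv
end

section
/- Let H be self-adjoint on a finite-dimensional Hilbert space with spectral projection P onto an interval I such that all other spectrum lies at distance ≥ γ from I. Let λ ∈ I and μ ∉ I be eigenvalues with |λ−μ| ≥ γ, and let w_γ ∈ L¹(ℝ) satisfy ∫ w_γ = 1 with Fourier transform ŵ_γ(ω) = ∫ w_γ(t)e^{−iωt}dt vanishing for |ω| ≥ γ. Then i ∫ dt w_γ(t) ∫_0^t du e^{±iu(λ−μ)} = ∓ 1/(λ−μ). -/
open MeasureTheory Complex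

/- Since `∫₀ᵗ e^{-iωu} du = (e^{-iωt} - 1)/(-iω)`, integrating against `f` produces
`(f̂(ω) - ∫ f)/(-iω)`; the Fourier transform vanishes at `ω` and `∫ f = 1`, which leaves
`1/(iω)`. Note that `f̂(0) = ∫ f = 1` forces `ω ≠ 0`. -/

lemma integrable_mul_exp_neg_I_mul {f : ℝ → ℂ} (hf : Integrable f) (ω : ℝ) :
    Integrable fun t : ℝ => f t * exp (-(I * ω * t)) := by
  refine hf.mul_bdd (c := 1) (by fun_prop) (ae_of_all _ fun t => ?_)
  have : -(I * ω * t) = ((-(ω * t) : ℝ) : ℂ) * I := by push_cast; ring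
  rw [this, norm_exp_ofReal_mul_I]

lemma intervalIntegral_exp_neg_I_mul {ω : ℝ} (hω : ω ≠ 0) (t : ℝ) :
    ∫ u in (0 : ℝ)..t, exp (-(I * ω * u)) = (exp (-(I * ω * t)) - 1) / -(I * ω) := by
  have hc : -(I * ω) ≠ 0 := by simpa using hω
  simp_rw [show ∀ u : ℂ, -(I * ω * u) = -(I * ω) * u from fun u => by ring]
  rw [integral_exp_mul_complex hc, ofReal_zero, mul_zero, exp_zero]

theorem I_mul_integral_mul_intervalIntegral_exp {f : ℝ → ℂ} (hf : Integrable f)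
    (hf1 : ∫ t, f t = 1) {ω : ℝ} (hfω : ∫ t, f t * exp (-(I * ω * t)) = 0) :
    I * ∫ t, f t * ∫ u in (0 : ℝ)..t, exp (-(I * ω * u)) = 1 / ω := by
  have hω : ω ≠ 0 := by
    rintro rfl
    simp [hf1] at hfω
  calc I * ∫ t, f t * ∫ u in (0 : ℝ)..t, exp (-(I * ω * u))
      = I * ∫ t, (f t * exp (-(I * ω * t)) - f t) / -(I * ω) := by
        simp_rw [intervalIntegral_exp_neg_I_mul hω, mul_div_assoc', mul_sub, mul_one]
    _ = I * ((∫ t, f t * exp (-(I * ω * t))) - ∫ t, f t) / -(I * ω) := by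
        rw [integral_div, integral_sub (integrable_mul_exp_neg_I_mul hf ω) hf, mul_div_assoc]
    _ = 1 / ω := by
        rw [hfω, hf1]
        field_simp
        ring

theorem oscillatory_integral_identity_general
    (γ lam mu : ℝ) (hgap : γ ≤ |lam - mu|)
    (w : ℝ → ℝ) (hw : Integrable w) (hw1 : ∫ t, w t = 1)
    (hwFourier : ∀ ω : ℝ, γ ≤ |ω| →
      (∫ t : ℝ, (w t : ℂ) * Complex.exp (-(Complex.I * (ω : ℂ) * (t : ℂ)))) = 0) :
    Complex.I * (∫ t : ℝ, (w t : ℂ) *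
        ∫ u in (0:ℝ)..t, Complex.exp (Complex.I * (u : ℂ) * ((lam : ℂ) - (mu : ℂ))))
      = -(1 / ((lam : ℂ) - (mu : ℂ))) ∧
    Complex.I * (∫ t : ℝ, (w t : ℂ) *
        ∫ u in (0:ℝ)..t, Complex.exp (-(Complex.I * (u : ℂ) * ((lam : ℂ) - (mu : ℂ)))))
      = 1 / ((lam : ℂ) - (mu : ℂ)) := by
  have hwC : ∫ t, (w t : ℂ) = 1 := by rw [integral_complex_ofReal, hw1, ofReal_one]
  have hwI : Integrable fun t => (w t : ℂ) := hw.ofReal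
  have key := fun ω hω => I_mul_integral_mul_intervalIntegral_exp hwI hwC (hwFourier ω hω)
  constructor
  · have h := key (mu - lam) (by rwa [abs_sub_comm])
    push_cast at h
    simp_rw [show ∀ u : ℂ, I * u * (lam - mu) = -(I * (mu - lam) * u) from fun u => by ring]
    rw [h, ← neg_sub (lam : ℂ), one_div_neg_eq_neg_one_div]
  · have h := key (lam - mu) hgap
    push_cast at h
    simpa only [show ∀ u : ℂ, I * u * (lam - mu) = I * (lam - mu) * u from fun u => by ring]
      using h

/-- The key oscillatory-integral identity of the quasi-adiabatic construction: if
`w_γ ∈ L¹(ℝ)` has `∫ w_γ = 1` and Fourier transform `ŵ_γ(ω) = ∫ w_γ(t) e^{-iωt} dt`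
vanishing for `|ω| ≥ γ`, and `|λ − μ| ≥ γ` with `γ > 0`, then
`i ∫ dt w_γ(t) ∫₀ᵗ du e^{± iu(λ−μ)} = ∓ 1/(λ−μ)`. -/
theorem oscillatory_integral_identity
    (γ lam mu : ℝ) (hγ : 0 < γ) (hgap : γ ≤ |lam - mu|)
    (w : ℝ → ℝ) (hw : Integrable w) (hw1 : ∫ t, w t = 1)
    (hwFourier : ∀ ω : ℝ, γ ≤ |ω| →
      (∫ t : ℝ, (w t : ℂ) * Complex.exp (-(Complex.I * (ω : ℂ) * (t : ℂ)))) = 0) :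
    Complex.I * (∫ t : ℝ, (w t : ℂ) *
        ∫ u in (0:ℝ)..t, Complex.exp (Complex.I * (u : ℂ) * ((lam : ℂ) - (mu : ℂ))))
      = -(1 / ((lam : ℂ) - (mu : ℂ))) ∧
    Complex.I * (∫ t : ℝ, (w t : ℂ) *
        ∫ u in (0:ℝ)..t, Complex.exp (-(Complex.I * (u : ℂ) * ((lam : ℂ) - (mu : ℂ)))))
      = 1 / ((lam : ℂ) - (mu : ℂ)) :=
  oscillatory_integral_identity_general γ lam mu hgap w hw hw1 hwFourier
end
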